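/- arXiv:2203.13117 — 3 statements merged into one kernel-verified Lean document; each statement's English description precedes it below -/
import Mathlib

section
/- Define the distance D(f,g;x) = (∑_{p ≤ x} (1 − Re(f(p)·conj(g(p))))/p)^{1/2} for multiplicative functions f, g taking values in the closed unit disc. Then D satisfies the triangle inequality: for any unit-disc-valued multiplicative functions f, f', g, g', D(ff', gg'; x) ≤ D(f,g;x) + D(f',g';x). -/
open Finset Complex

/-- The pretentious distance `D(f,g;x)` between unit-disc-valued multiplicative functions. -/
noncomputable def pretentiousDist (f g : ℕ → ℂ) (x : ℝ) : ℝ :=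
  Real.sqrt (∑ p ∈ Finset.filter Nat.Prime (Finset.range (⌊x⌋₊ + 1)),
    (1 - (f p * (starRingEnd ℂ) (g p)).re) / p)

/-!
For `z` in the closed unit disc, `√(1 - Re z)` behaves like a length: writing
`1 - Re(ab) = (1 - Re a) + (1 - Re b) - Re((1 - a)(1 - b))` and using
`|1 - z|² ≤ 2 (1 - Re z)` gives `√(1 - Re(ab)) ≤ √(1 - Re a) + √(1 - Re b)`.
Applied to `a = f(p) conj g(p)`, `b = f'(p) conj g'(p)` and summed over `p ≤ x`
with Minkowski's inequality in `ℓ²`, this is the triangle inequality for `D`.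
-/

namespace Complex

lemma re_le_one_of_norm_le_one {z : ℂ} (hz : ‖z‖ ≤ 1) : z.re ≤ 1 :=
  (re_le_norm z).trans hz

lemma norm_mul_conj_le_one {z w : ℂ} (hz : ‖z‖ ≤ 1) (hw : ‖w‖ ≤ 1) :
    ‖z * starRingEnd ℂ w‖ ≤ 1 := by
  rw [norm_mul, norm_conj]
  exact mul_le_one₀ hz (norm_nonneg w) hw

lemma norm_one_sub_sq_le {z : ℂ} (hz : ‖z‖ ≤ 1) : ‖1 - z‖ ^ 2 ≤ 2 * (1 - z.re) := by
  have h : ‖z‖ ^ 2 ≤ 1 := pow_le_one₀ (norm_nonneg z) hz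
  rw [Complex.sq_norm, normSq_apply] at h ⊢
  simp only [sub_re, one_re, sub_im, one_im]
  linarith

lemma norm_one_sub_le_sqrt {z : ℂ} (hz : ‖z‖ ≤ 1) : ‖1 - z‖ ≤ √2 * √(1 - z.re) := by
  rw [← Real.sqrt_mul zero_le_two]
  exact Real.le_sqrt_of_sq_le (norm_one_sub_sq_le hz)

lemma sqrt_one_sub_re_mul_le {a b : ℂ} (ha : ‖a‖ ≤ 1) (hb : ‖b‖ ≤ 1) :
    √(1 - (a * b).re) ≤ √(1 - a.re) + √(1 - b.re) := by
  have hA : 0 ≤ 1 - a.re := sub_nonneg.2 (re_le_one_of_norm_le_one ha)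
  have hB : 0 ≤ 1 - b.re := sub_nonneg.2 (re_le_one_of_norm_le_one hb)
  have hprod : ‖(1 - a) * (1 - b)‖ ≤ 2 * (√(1 - a.re) * √(1 - b.re)) := calc
    ‖(1 - a) * (1 - b)‖ = ‖1 - a‖ * ‖1 - b‖ := norm_mul _ _
    _ ≤ (√2 * √(1 - a.re)) * (√2 * √(1 - b.re)) :=
      mul_le_mul (norm_one_sub_le_sqrt ha) (norm_one_sub_le_sqrt hb) (norm_nonneg _)
        (by positivity)
    _ = 2 * (√(1 - a.re) * √(1 - b.re)) := by
      rw [mul_mul_mul_comm, Real.mul_self_sqrt zero_le_two]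
  rw [Real.sqrt_le_left (by positivity)]
  calc 1 - (a * b).re = (1 - a.re) + (1 - b.re) - ((1 - a) * (1 - b)).re := by
        simp only [mul_re, sub_re, sub_im, one_re, one_im]; ring
    _ ≤ (1 - a.re) + (1 - b.re) + ‖(1 - a) * (1 - b)‖ := by
        linarith [neg_le_of_abs_le (abs_re_le_norm ((1 - a) * (1 - b)))]
    _ ≤ (√(1 - a.re) + √(1 - b.re)) ^ 2 := by
        rw [add_sq, Real.sq_sqrt hA, Real.sq_sqrt hB]; linarith

end Complex

namespace Real

variable {ι : Type*}

-- Minkowski's inequality for the vectors `(√(a i))` and `(√(b i))`.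
lemma sqrt_sum_le_add_of_sqrt_le_add {s : Finset ι} {a b c : ι → ℝ}
    (ha : ∀ i, 0 ≤ a i) (hb : ∀ i, 0 ≤ b i) (hc : ∀ i ∈ s, √(c i) ≤ √(a i) + √(b i)) :
    √(∑ i ∈ s, c i) ≤ √(∑ i ∈ s, a i) + √(∑ i ∈ s, b i) := by
  rw [sqrt_le_left (by positivity)]
  calc ∑ i ∈ s, c i ≤ ∑ i ∈ s, (√(a i) + √(b i)) ^ 2 :=
        sum_le_sum fun i hi ↦ (sqrt_le_left (by positivity)).1 (hc i hi)
    _ = ∑ i ∈ s, a i + 2 * ∑ i ∈ s, √(a i) * √(b i) + ∑ i ∈ s, b i := by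
        simp only [add_sq, sq_sqrt (ha _), sq_sqrt (hb _), sum_add_distrib, mul_sum, mul_assoc]
    _ ≤ ∑ i ∈ s, a i + 2 * (√(∑ i ∈ s, a i) * √(∑ i ∈ s, b i)) + ∑ i ∈ s, b i := by
        gcongr; exact sum_sqrt_mul_sqrt_le s ha hb
    _ = (√(∑ i ∈ s, a i) + √(∑ i ∈ s, b i)) ^ 2 := by
        rw [add_sq, sq_sqrt (sum_nonneg fun i _ ↦ ha i), sq_sqrt (sum_nonneg fun i _ ↦ hb i)]
        ring

lemma sqrt_div_le_add_of_sqrt_le_add {a b c w : ℝ} (hw : 0 ≤ w) (h : √c ≤ √a + √b) :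
    √(c / w) ≤ √(a / w) + √(b / w) := by
  simp only [sqrt_div' _ hw, ← add_div]
  exact div_le_div_of_nonneg_right h (sqrt_nonneg w)

end Real

lemma one_sub_re_mul_conj_div_nonneg {u v : ℕ → ℂ} (hu : ∀ n, ‖u n‖ ≤ 1)
    (hv : ∀ n, ‖v n‖ ≤ 1) (n : ℕ) : 0 ≤ (1 - (u n * starRingEnd ℂ (v n)).re) / n :=
  div_nonneg (sub_nonneg.2 (re_le_one_of_norm_le_one (norm_mul_conj_le_one (hu n) (hv n))))
    n.cast_nonneg

theorem pretentiousDist_triangle_general (f f' g g' : ℕ → ℂ)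
    (hfb : ∀ n, ‖f n‖ ≤ 1) (hf'b : ∀ n, ‖f' n‖ ≤ 1)
    (hgb : ∀ n, ‖g n‖ ≤ 1) (hg'b : ∀ n, ‖g' n‖ ≤ 1) (x : ℝ) :
    pretentiousDist (f * f') (g * g') x ≤ pretentiousDist f g x + pretentiousDist f' g' x := by
  refine Real.sqrt_sum_le_add_of_sqrt_le_add (one_sub_re_mul_conj_div_nonneg hfb hgb)
    (one_sub_re_mul_conj_div_nonneg hf'b hg'b) fun p _ ↦
      Real.sqrt_div_le_add_of_sqrt_le_add p.cast_nonneg ?_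
  have hsplit : (f * f') p * starRingEnd ℂ ((g * g') p)
      = (f p * starRingEnd ℂ (g p)) * (f' p * starRingEnd ℂ (g' p)) := by
    simp only [Pi.mul_apply, map_mul]; ring
  rw [hsplit]
  exact sqrt_one_sub_re_mul_le (norm_mul_conj_le_one (hfb p) (hgb p))
    (norm_mul_conj_le_one (hf'b p) (hg'b p))

/-- The triangle inequality for the pretentious distance:
`D(ff', gg'; x) ≤ D(f,g;x) + D(f',g';x)`. -/
theorem pretentiousDist_triangle (f f' g g' : ℕ → ℂ)
    (hf : ∀ m n : ℕ, Nat.Coprime m n → f (m * n) = f m * f n)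
    (hf' : ∀ m n : ℕ, Nat.Coprime m n → f' (m * n) = f' m * f' n)
    (hg : ∀ m n : ℕ, Nat.Coprime m n → g (m * n) = g m * g n)
    (hg' : ∀ m n : ℕ, Nat.Coprime m n → g' (m * n) = g' m * g' n)
    (hfb : ∀ n, ‖f n‖ ≤ 1) (hf'b : ∀ n, ‖f' n‖ ≤ 1)
    (hgb : ∀ n, ‖g n‖ ≤ 1) (hg'b : ∀ n, ‖g' n‖ ≤ 1) (x : ℝ) :
    pretentiousDist (f * f') (g * g') x ≤ pretentiousDist f g x + pretentiousDist f' g' x :=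
  pretentiousDist_triangle_general f f' g g' hfb hf'b hgb hg'b x
end

section
/- Let k ≥ 2 be an integer that is not a power of 10, let ℓ be a nonzero integer, and let α be any real number. Then the sum ∑_{p ≤ x} (1 − Re(e^{2πiℓ log₁₀ k} · p^{−iα}))/p over primes p tends to infinity as x → ∞. -/
/-!
Write `c = e^{2πiℓ log₁₀ k}`; then `|c| = 1` and `c ≠ 1`, since `ℓ log₁₀ k ∈ ℤ` would make
`k^|ℓ|` a power of `10`, hence `k` itself one. The summands are nonnegative, so if the sum stayed
bounded the series `∑_p (1 - Re(c p^{-iα}))/p` would converge, with value `C` say. Comparing with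
the prime zeta function `P(s) = ∑_p p^{-s}` gives `Re(c P(σ+iα)) ≥ P(σ) - C` for `σ > 1`, while
`|P(σ+iα)| ≤ P(σ) → ∞` as `σ → 1⁺`; hence `c P(σ+iα) / P(σ) → 1`. For `α ≠ 0`,
`Re P(σ+iα) = log |ζ(σ+iα)| + O(1)` stays bounded because `ζ(1+iα) ≠ 0`, which forces `Re c = 0`.
Since `1 - Re(w²) ≤ 4 (1 - Re w)` for `|w| ≤ 1`, the same applies to `c²` and `2α`, so
`Re(c²) = 0` too, contradicting `c² = -1`. For `α = 0` the series is `(1 - Re c) ∑_p 1/p`,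
which diverges unless `c = 1`.
-/

open Finset Complex Filter Topology Asymptotics

theorem Nat.exists_eq_pow_of_pow_eq_pow_of_padicValNat_eq_one {q n k a b : ℕ} [Fact q.Prime]
    (hn : padicValNat q n = 1) (ha : a ≠ 0) (h : k ^ a = n ^ b) : ∃ j, k = n ^ j := by
  have hb : b = padicValNat q k * a := by
    simpa [padicValNat.pow, hn, mul_comm, eq_comm] using congrArg (padicValNat q) h
  exact ⟨padicValNat q k, Nat.pow_left_injective ha (by simpa [hb, pow_mul] using h)⟩

lemma pow_natAbs_eq_pow_natAbs_of_mul_logb_eq {b k : ℕ} (hb : 1 < b) (hk : k ≠ 0) {m n : ℤ}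
    (h : m * Real.logb b k = n) : k ^ m.natAbs = b ^ n.natAbs := by
  have hlogb : 0 < Real.log b := Real.log_pos (by exact_mod_cast hb)
  have hlogk : 0 ≤ Real.log k :=
    Real.log_nonneg (by exact_mod_cast Nat.one_le_iff_ne_zero.mpr hk)
  have hlog : m.natAbs * Real.log k = n.natAbs * Real.log b := by
    rw [Real.logb, mul_div_assoc', div_eq_iff hlogb.ne'] at h
    have := congrArg abs h
    rw [abs_mul, abs_mul, abs_of_nonneg hlogk, abs_of_pos hlogb] at this
    simpa [Nat.cast_natAbs] using this
  have : ((k ^ m.natAbs : ℕ) : ℝ) = (b ^ n.natAbs : ℕ) := by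
    refine Real.log_injOn_pos (by simp; positivity) (by simp; positivity) ?_
    push_cast
    rw [Real.log_pow, Real.log_pow, hlog]
  exact_mod_cast this

lemma exp_two_pi_I_mul_logb_ne_one {k : ℕ} (hk : k ≠ 0) (hk10 : ¬∃ j : ℕ, k = 10 ^ j) {ℓ : ℤ}
    (hℓ : ℓ ≠ 0) : exp (2 * Real.pi * I * ℓ * (Real.logb 10 k : ℂ)) ≠ 1 := by
  rw [Ne, exp_eq_one_iff]
  rintro ⟨n, hn⟩
  have h : ℓ * Real.logb 10 k = n := by
    have h2πI : 2 * (Real.pi : ℂ) * I ≠ 0 := by simp [Real.pi_ne_zero]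
    exact_mod_cast mul_left_cancel₀ h2πI (by linear_combination hn :
      2 * (Real.pi : ℂ) * I * (ℓ * (Real.logb 10 k : ℂ)) = 2 * Real.pi * I * n)
  have h10 : padicValNat 2 10 = 1 := by
    rw [show 10 = 2 * 5 from rfl, padicValNat.mul two_ne_zero (by norm_num), padicValNat_self,
      padicValNat.eq_zero_of_not_dvd (by norm_num)]
  exact hk10 <| Nat.exists_eq_pow_of_pow_eq_pow_of_padicValNat_eq_one h10
    (Int.natAbs_ne_zero.mpr hℓ) (pow_natAbs_eq_pow_natAbs_of_mul_logb_eq (by norm_num) hk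
      (by exact_mod_cast h))

lemma Complex.norm_log_one_sub_add_self_le {z : ℂ} (hz : ‖z‖ ≤ 1 / 2) :
    ‖log (1 - z) + z‖ ≤ ‖z‖ ^ 2 := by
  have h := norm_log_one_add_sub_self_le (z := -z) (by rw [norm_neg]; linarith)
  rw [norm_neg, ← sub_eq_add_neg, sub_neg_eq_add] at h
  refine h.trans ?_
  have : (1 - ‖z‖)⁻¹ ≤ 2 := by rw [inv_le_comm₀ (by linarith) two_pos]; linarith
  nlinarith [sq_nonneg ‖z‖]

lemma Complex.one_sub_re_sq_le {z : ℂ} (hz : ‖z‖ ≤ 1) : 1 - (z ^ 2).re ≤ 4 * (1 - z.re) := by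
  have hsq : z.re ^ 2 + z.im ^ 2 ≤ 1 := by
    have := normSq_eq_norm_sq z
    rw [normSq_apply] at this
    nlinarith [norm_nonneg z]
  have hre : z.re ≤ 1 := (re_le_norm z).trans hz
  rw [sq z, mul_re]
  nlinarith

lemma summable_one_sub_re_sq_div {ι : Type*} {w : ι → ℂ} {a : ι → ℝ} (hw : ∀ i, ‖w i‖ ≤ 1)
    (ha : ∀ i, 0 ≤ a i) (h : Summable fun i => (1 - (w i).re) / a i) :
    Summable fun i => (1 - (w i ^ 2).re) / a i := by
  refine (h.mul_left 4).of_nonneg_of_le (fun i => div_nonneg ?_ (ha i)) fun i => ?_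
  · have := (re_le_norm _).trans
      ((norm_pow (w i) 2).trans_le (pow_le_one₀ (norm_nonneg _) (hw i)))
    linarith
  · rw [← mul_div_assoc]; exact div_le_div_of_nonneg_right (one_sub_re_sq_le (hw i)) (ha i)

lemma tendsto_div_nhds_one_of_norm_le_of_sub_le_re {ι : Type*} {l : Filter ι} {u : ι → ℂ}
    {L : ι → ℝ} {C : ℝ} (hL : Tendsto L l atTop) (hnorm : ∀ᶠ i in l, ‖u i‖ ≤ L i)
    (hre : ∀ᶠ i in l, L i - C ≤ (u i).re) : Tendsto (fun i => u i / L i) l (𝓝 1) := by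
  have hsq : Tendsto (fun i => ‖u i / L i - 1‖ ^ 2) l (𝓝 0) := by
    refine squeeze_zero' (.of_forall fun _ => by positivity) ?_
      (tendsto_const_nhds.div_atTop hL : Tendsto (fun i => 2 * C / L i) l (𝓝 0))
    filter_upwards [hnorm, hre, hL.eventually_gt_atTop 0] with i hn hr hL0
    -- `‖u - L‖² = ‖u‖² - 2 L Re u + L² ≤ 2 C L`
    have hL0' : (L i : ℂ) ≠ 0 := ofReal_ne_zero.mpr hL0.ne'
    rw [div_sub_one hL0', norm_div, norm_real, Real.norm_of_nonneg hL0.le, div_pow,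
      div_le_div_iff₀ (by positivity) hL0, ← normSq_eq_norm_sq, normSq_sub]
    have : (u i * (starRingEnd ℂ) (L i)).re = L i * (u i).re := by simp [mul_comm]
    rw [this, normSq_ofReal, normSq_eq_norm_sq]
    have hle : ‖u i‖ ^ 2 + L i * L i - 2 * (L i * (u i).re) ≤ 2 * C * L i := by
      nlinarith [mul_le_mul hn hn (norm_nonneg _) hL0.le]
    nlinarith [mul_le_mul_of_nonneg_right hle hL0.le]
  have := hsq.sqrt
  simp only [Real.sqrt_sq (norm_nonneg _), Real.sqrt_zero] at this
  exact tendsto_sub_nhds_zero_iff.mp (tendsto_zero_iff_norm_tendsto_zero.mpr this)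

noncomputable def primeZeta (s : ℂ) : ℂ := ∑' p : Nat.Primes, (p : ℂ) ^ (-s)

lemma Nat.Primes.norm_cpow_neg (p : Nat.Primes) (s : ℂ) :
    ‖(p : ℂ) ^ (-s)‖ = (p : ℝ) ^ (-s.re) := by
  simp [norm_natCast_cpow_of_pos p.prop.pos]

lemma summable_primes_cpow_neg {s : ℂ} (hs : 1 < s.re) :
    Summable fun p : Nat.Primes => (p : ℂ) ^ (-s) :=
  .of_norm <| by simpa [Nat.Primes.norm_cpow_neg] using
    Nat.Primes.summable_rpow.mpr (neg_lt_neg hs)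

lemma re_primeZeta_ofReal (σ : ℝ) :
    (primeZeta σ).re = ∑' p : Nat.Primes, (p : ℝ) ^ (-σ) := by
  rw [primeZeta, ← ofReal_re (∑' p : Nat.Primes, _), ofReal_tsum]
  congr 1
  exact tsum_congr fun p => by rw [ofReal_cpow (Nat.cast_nonneg _)]; push_cast; rfl

lemma norm_primeZeta_le {s : ℂ} (hs : 1 < s.re) : ‖primeZeta s‖ ≤ (primeZeta s.re).re := by
  rw [re_primeZeta_ofReal, ← tsum_congr (Nat.Primes.norm_cpow_neg · s)]
  exact norm_tsum_le_tsum_norm (summable_primes_cpow_neg hs).norm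

lemma tendsto_re_primeZeta_nhdsGT_one :
    Tendsto (fun σ : ℝ => (primeZeta σ).re) (𝓝[>] 1) atTop := by
  simp only [re_primeZeta_ofReal]
  refine tendsto_atTop.mpr fun M => ?_
  obtain ⟨S, hS⟩ : ∃ S : Finset Nat.Primes, M < ∑ p ∈ S, (p : ℝ) ^ (-1 : ℝ) := by
    by_contra! h
    exact Nat.Primes.not_summable_one_div <| summable_of_sum_le (fun p => by positivity)
      (by simpa [Real.rpow_neg_one] using h)
  have hcont : Tendsto (fun σ : ℝ => ∑ p ∈ S, (p : ℝ) ^ (-σ)) (𝓝 1)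
      (𝓝 (∑ p ∈ S, (p : ℝ) ^ (-1 : ℝ))) :=
    tendsto_finsetSum S fun p _ =>
      ((Real.continuousAt_const_rpow (Nat.cast_ne_zero.mpr p.prop.ne_zero)).comp
        continuous_neg.continuousAt)
  filter_upwards [nhdsWithin_le_nhds (hcont.eventually (eventually_gt_nhds hS)),
    self_mem_nhdsWithin] with σ hσS hσ
  exact hσS.le.trans <| (Nat.Primes.summable_rpow.mpr (neg_lt_neg hσ)).sum_le_tsum S
    fun p _ => by positivity

lemma abs_re_primeZeta_sub_log_norm_riemannZeta_le {s : ℂ} (hs : 1 < s.re) :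
    |(primeZeta s).re - Real.log ‖riemannZeta s‖| ≤ ∑' p : Nat.Primes, (p : ℝ) ^ (-2 : ℝ) := by
  have hP := summable_primes_cpow_neg hs
  have hlog := hP.clog_one_sub
  have hbound (p : Nat.Primes) :
      ‖(p : ℂ) ^ (-s) + log (1 - (p : ℂ) ^ (-s))‖ ≤ (p : ℝ) ^ (-2 : ℝ) := by
    have hp : (2 : ℝ) ≤ p := by exact_mod_cast p.prop.two_le
    have hnorm : ‖(p : ℂ) ^ (-s)‖ ≤ (p : ℝ)⁻¹ := by
      rw [Nat.Primes.norm_cpow_neg, ← Real.rpow_neg_one]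
      exact Real.rpow_le_rpow_of_exponent_le (by linarith) (by simp; linarith)
    rw [add_comm]
    refine (norm_log_one_sub_add_self_le (hnorm.trans ?_)).trans ?_
    · rw [one_div]; exact inv_anti₀ two_pos hp
    · rw [Real.rpow_neg (by positivity), Real.rpow_two, ← inv_pow]
      gcongr
  have hsum : ∑' p : Nat.Primes, -log (1 - (p : ℂ) ^ (-s))
      = primeZeta s - ∑' p : Nat.Primes, ((p : ℂ) ^ (-s) + log (1 - (p : ℂ) ^ (-s))) := by
    rw [primeZeta, ← hP.tsum_sub (hP.add hlog)]
    exact tsum_congr fun p => by ring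
  have hre : Real.log ‖riemannZeta s‖ = (∑' p : Nat.Primes, -log (1 - (p : ℂ) ^ (-s))).re := by
    rw [← riemannZeta_eulerProduct_exp_log hs, norm_exp, Real.log_exp]
  rw [hre, hsum, sub_re, sub_sub_cancel]
  calc |(∑' p : Nat.Primes, ((p : ℂ) ^ (-s) + log (1 - (p : ℂ) ^ (-s)))).re|
      ≤ ‖∑' p : Nat.Primes, ((p : ℂ) ^ (-s) + log (1 - (p : ℂ) ^ (-s)))‖ := abs_re_le_norm _
    _ ≤ ∑' p : Nat.Primes, (p : ℝ) ^ (-2 : ℝ) :=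
      tsum_of_norm_bounded (Nat.Primes.summable_rpow.mpr (by norm_num)).hasSum hbound

lemma isBigO_re_primeZeta_nhdsGT_one {t : ℝ} (ht : t ≠ 0) :
    (fun σ : ℝ => (primeZeta (σ + t * I)).re) =O[𝓝[>] 1] fun _ => (1 : ℝ) := by
  have hs : ((1 : ℝ) : ℂ) + t * I ≠ 1 := fun h => ht (by simpa using congrArg im h)
  have hζ : ContinuousAt (fun σ : ℝ => Real.log ‖riemannZeta (σ + t * I)‖) 1 :=
    ((differentiableAt_riemannZeta hs).continuousAt.comp
      (f := fun σ : ℝ => (σ : ℂ) + t * I) (by fun_prop)).norm.log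
      (norm_ne_zero_iff.mpr (riemannZeta_ne_zero_of_one_le_re (by simp)))
  have herr : (fun σ : ℝ => (primeZeta (σ + t * I)).re - Real.log ‖riemannZeta (σ + t * I)‖)
      =O[𝓝[>] 1] fun _ => (1 : ℝ) :=
    .of_bound (∑' p : Nat.Primes, (p : ℝ) ^ (-2 : ℝ)) <| by
      filter_upwards [self_mem_nhdsWithin] with σ (hσ : 1 < σ)
      simpa using
        abs_re_primeZeta_sub_log_norm_riemannZeta_le (s := σ + t * I) (by simpa using hσ)
  simpa using (hζ.tendsto.mono_left nhdsWithin_le_nhds).isBigO_one ℝ |>.add herr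

lemma Nat.Primes.cpow_neg_add_mul_I (p : Nat.Primes) (σ t : ℝ) :
    (p : ℂ) ^ (-(σ + t * I)) = ((p : ℝ) ^ (-σ) : ℝ) * (p : ℂ) ^ (-(I * t)) := by
  rw [ofReal_cpow (Nat.cast_nonneg _), ofReal_natCast,
    ← cpow_add _ _ (Nat.cast_ne_zero.mpr p.prop.ne_zero)]
  push_cast
  ring_nf

lemma Nat.Primes.norm_cpow_neg_I_mul (p : Nat.Primes) (t : ℝ) :
    ‖(p : ℂ) ^ (-(I * t))‖ = 1 := by
  simp [Nat.Primes.norm_cpow_neg]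

lemma re_primeZeta_sub_tsum_le_re_mul_primeZeta {c : ℂ} (hc : ‖c‖ ≤ 1) {t σ : ℝ} (hσ : 1 < σ)
    (hsum : Summable fun p : Nat.Primes => (1 - (c * (p : ℂ) ^ (-(I * t))).re) / p) :
    (primeZeta σ).re - ∑' p : Nat.Primes, (1 - (c * (p : ℂ) ^ (-(I * t))).re) / p
      ≤ (c * primeZeta (σ + t * I)).re := by
  have hP : HasSum (fun p : Nat.Primes => (p : ℝ) ^ (-σ)) (primeZeta σ).re := by
    rw [re_primeZeta_ofReal]; exact (Nat.Primes.summable_rpow.mpr (neg_lt_neg hσ)).hasSum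
  have hQ : HasSum (fun p : Nat.Primes => (c * (p : ℂ) ^ (-(σ + t * I))).re)
      (c * primeZeta (σ + t * I)).re :=
    hasSum_re ((summable_primes_cpow_neg (by simpa using hσ)).hasSum.mul_left c)
  have hle (p : Nat.Primes) : (p : ℝ) ^ (-σ) - (c * (p : ℂ) ^ (-(σ + t * I))).re
      ≤ (1 - (c * (p : ℂ) ^ (-(I * t))).re) / p := by
    have hw : (c * (p : ℂ) ^ (-(I * t))).re ≤ 1 := (re_le_norm _).trans <| by
      simpa [Nat.Primes.norm_cpow_neg_I_mul] using hc
    have hp : (1 : ℝ) ≤ p := by exact_mod_cast p.prop.one_lt.le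
    have hσp : (p : ℝ) ^ (-σ) ≤ (p : ℝ)⁻¹ := by
      rw [← Real.rpow_neg_one]; exact Real.rpow_le_rpow_of_exponent_le hp (by linarith)
    rw [Nat.Primes.cpow_neg_add_mul_I, mul_left_comm, re_ofReal_mul, div_eq_mul_inv]
    nlinarith
  linarith [hasSum_le hle (hP.sub hQ) hsum.hasSum]

lemma re_eq_zero_of_summable_one_sub_re_mul_cpow_div {c : ℂ} (hc : ‖c‖ = 1) {t : ℝ} (ht : t ≠ 0)
    (hsum : Summable fun p : Nat.Primes => (1 - (c * (p : ℂ) ^ (-(I * t))).re) / p) :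
    c.re = 0 := by
  have hL := tendsto_re_primeZeta_nhdsGT_one
  have hlim : Tendsto (fun σ : ℝ => c * primeZeta (σ + t * I) / (primeZeta σ).re) (𝓝[>] 1)
      (𝓝 1) := by
    refine tendsto_div_nhds_one_of_norm_le_of_sub_le_re (C := ∑' p : Nat.Primes,
      (1 - (c * (p : ℂ) ^ (-(I * t))).re) / p) hL ?_ ?_ <;>
      filter_upwards [self_mem_nhdsWithin] with σ (hσ : 1 < σ)
    · rw [norm_mul, hc, one_mul]
      simpa using norm_primeZeta_le (s := σ + t * I) (by simpa using hσ)
    · exact re_primeZeta_sub_tsum_le_re_mul_primeZeta hc.le hσ hsum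
  have hzero : Tendsto (fun σ : ℝ => (primeZeta (σ + t * I)).re / (primeZeta σ).re) (𝓝[>] 1)
      (𝓝 0) :=
    ((isBigO_re_primeZeta_nhdsGT_one ht).trans_isLittleO
      ((isLittleO_one_left_iff ℝ).mpr (tendsto_norm_atTop_atTop.comp hL))).tendsto_div_nhds_zero
  have hre : Tendsto (fun σ : ℝ => (primeZeta (σ + t * I)).re / (primeZeta σ).re) (𝓝[>] 1)
      (𝓝 c.re) := by
    have := (continuous_re.tendsto _).comp (hlim.const_mul (starRingEnd ℂ c))
    rw [mul_one, conj_re] at this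
    refine this.congr fun σ => ?_
    rw [Function.comp_apply, ← mul_div_assoc, ← mul_assoc, conj_mul', hc, div_ofReal_re]
    simp
  exact tendsto_nhds_unique hre hzero

lemma tendsto_sum_primes_floor_atTop {f : ℕ → ℝ} (hf : ∀ p, p.Prime → 0 ≤ f p)
    (h : ¬Summable fun p : Nat.Primes => f p) :
    Tendsto (fun x : ℝ => ∑ p ∈ filter Nat.Prime (range (⌊x⌋₊ + 1)), f p) atTop atTop := by
  have hind : ¬Summable ({p : ℕ | p.Prime}.indicator f) :=
    summable_subtype_iff_indicator.not.mp h
  have := (not_summable_iff_tendsto_nat_atTop_of_nonneg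
    (Set.indicator_nonneg fun p hp => hf p hp)).mp hind
  refine (this.comp ((tendsto_add_atTop_nat 1).comp tendsto_nat_floor_atTop)).congr fun x => ?_
  rw [Function.comp_apply, Finset.sum_filter]
  refine Finset.sum_congr rfl fun i _ => ?_
  split_ifs with hi
  exacts [Set.indicator_of_mem hi f, Set.indicator_of_notMem hi f]

/-- For `k ≥ 2` not a power of `10`, nonzero integer `ℓ` and any real `α`, the sum
`∑_{p ≤ x} (1 − Re(e^{2πiℓ log₁₀ k} p^{−iα}))/p` tends to infinity. -/
theorem sum_dist_dk_tendsto_atTop (k : ℕ) (hk : 2 ≤ k) (hk10 : ¬∃ j : ℕ, k = 10 ^ j)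
    (ℓ : ℤ) (hℓ : ℓ ≠ 0) (α : ℝ) :
    Tendsto (fun x : ℝ =>
        ∑ p ∈ Finset.filter Nat.Prime (Finset.range (⌊x⌋₊ + 1)),
          (1 - (Complex.exp (2 * Real.pi * Complex.I * (ℓ : ℂ) * (Real.logb 10 k : ℂ))
              * (p : ℂ) ^ (-(Complex.I * (α : ℂ)))).re) / p)
      atTop atTop := by
  set c := exp (2 * Real.pi * I * ℓ * (Real.logb 10 k : ℂ)) with hcdef
  have hc : ‖c‖ = 1 := by
    rw [hcdef, show 2 * Real.pi * I * ℓ * (Real.logb 10 k : ℂ)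
      = (2 * Real.pi * ℓ * Real.logb 10 k : ℝ) * I by push_cast; ring, norm_exp_ofReal_mul_I]
  have hc1 : c ≠ 1 := exp_two_pi_I_mul_logb_ne_one (by omega) hk10 hℓ
  have hw (p : Nat.Primes) : ‖c * (p : ℂ) ^ (-(I * α))‖ = 1 := by
    rw [norm_mul, hc, Nat.Primes.norm_cpow_neg_I_mul, one_mul]
  refine tendsto_sum_primes_floor_atTop (fun p hp => div_nonneg ?_ (Nat.cast_nonneg p))
    fun hsum => ?_
  · linarith [(re_le_norm _).trans (hw ⟨p, hp⟩).le]
  rcases eq_or_ne α 0 with rfl | hα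
  · have hre : c.re = 1 := by
      by_contra h
      simp only [ofReal_zero, mul_zero, neg_zero, cpow_zero, mul_one] at hsum
      refine Nat.Primes.not_summable_one_div <|
        (summable_mul_left_iff (sub_ne_zero.mpr (Ne.symm h))).mp ?_
      exact hsum.congr fun p => by ring
    have him : 0 = c.im := (le_def.mp (re_eq_norm.mp (hre.trans hc.symm))).2
    exact hc1 (Complex.ext hre him.symm)
  · have hre := re_eq_zero_of_summable_one_sub_re_mul_cpow_div hc hα hsum
    have hsum2 : Summable fun p : Nat.Primes =>
        (1 - (c ^ 2 * (p : ℂ) ^ (-(I * (2 * α : ℝ)))).re) / p := by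
      refine (summable_one_sub_re_sq_div (fun p => (hw p).le) (fun _ => Nat.cast_nonneg _)
        hsum).congr fun p => ?_
      rw [mul_pow, ← cpow_nat_mul]
      push_cast
      ring_nf
    have hre2 := re_eq_zero_of_summable_one_sub_re_mul_cpow_div (by rw [norm_pow, hc, one_pow])
      (mul_ne_zero two_ne_zero hα) hsum2
    have hnorm := normSq_eq_norm_sq c
    rw [hc, normSq_apply] at hnorm
    rw [sq, mul_re] at hre2
    nlinarith
end

section
/- Let f be a multiplicative function with |f(n)| ≤ 1 for all n, and suppose there exist distinct real numbers α, α' with D(f, n^{iα}; ∞) < ∞ and D(f, n^{iα'}; ∞) < ∞. Then α = α'. (Uniqueness of the pretentious target n^{iα}.) -/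
/-!
Put `β = α - α'`. Since `f` pretends to be both `n^{iα}` and `n^{iα'}`, the triangle inequality
for the pretentious distance makes `∑_p (1 - cos (β log p)) / p` converge. For `σ > 1` the Euler
product gives `log |ζ σ| - log |ζ (σ + iβ)| = ∑_p p^{-σ} (1 - cos (β log p)) + O(1)`, which is then
bounded as `σ → 1⁺`. This is impossible when `β ≠ 0`: `ζ` has a pole at `1` but is bounded near
`1 + iβ`.
-/

open Complex Filter Topology

lemma re_natCast_cpow {n : ℕ} (hn : 0 < n) (s : ℂ) :
    ((n : ℂ) ^ s).re = (n : ℝ) ^ s.re * Real.cos (s.im * Real.log n) := by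
  rw [cpow_def_of_ne_zero (by exact_mod_cast hn.ne'), exp_re,
    Real.rpow_def_of_pos (by exact_mod_cast hn), ← natCast_log, re_ofReal_mul, im_ofReal_mul,
    mul_comm (Real.log _) s.im]

lemma norm_natCast_cpow_I_mul {n : ℕ} (hn : 0 < n) (a : ℝ) : ‖(n : ℂ) ^ (I * a)‖ = 1 := by
  simp [norm_natCast_cpow_of_pos hn]

lemma conj_natCast_cpow (n : ℕ) (s : ℂ) :
    starRingEnd ℂ ((n : ℂ) ^ s) = (n : ℂ) ^ starRingEnd ℂ s := by
  simpa using (conj_cpow (n : ℂ) (starRingEnd ℂ s) (by rw [natCast_arg]; exact Real.pi_pos.ne)).symm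

lemma re_natCast_cpow_I_mul_mul_conj {n : ℕ} (hn : 0 < n) (a b : ℝ) :
    ((n : ℂ) ^ (I * a) * starRingEnd ℂ ((n : ℂ) ^ (I * b))).re =
      Real.cos ((a - b) * Real.log n) := by
  rw [conj_natCast_cpow, ← cpow_add _ _ (by exact_mod_cast hn.ne'), re_natCast_cpow hn]
  simp [sub_eq_add_neg]

/-- The triangle inequality for the pretentious distance, squared and termwise:
`‖z - w‖² = 2 (1 - Re (z w̄)) ≤ 2 ‖z - u‖² + 2 ‖u - w‖²`, and `‖z - u‖² ≤ 2 (1 - Re (u z̄))`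
because `‖u‖ ≤ 1`. -/
lemma one_sub_re_mul_conj_le {u z w : ℂ} (hu : ‖u‖ ≤ 1) (hz : ‖z‖ = 1) (hw : ‖w‖ = 1) :
    1 - (z * starRingEnd ℂ w).re ≤
      2 * (1 - (u * starRingEnd ℂ z).re) + 2 * (1 - (u * starRingEnd ℂ w).re) := by
  have hu' := Complex.sq_norm u
  have hz' := Complex.sq_norm z
  have hw' := Complex.sq_norm w
  rw [normSq_apply] at hu' hz' hw'
  rw [hz] at hz'
  rw [hw] at hw'
  simp only [mul_re, conj_re, conj_im]
  nlinarith [sq_nonneg (z.re - 2 * u.re + w.re), sq_nonneg (z.im - 2 * u.im + w.im), norm_nonneg u]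

lemma summable_one_sub_cos_mul_log_div {f : ℕ → ℂ} (hb : ∀ n, ‖f n‖ ≤ 1) {α α' : ℝ}
    (h : Summable fun p : Nat.Primes =>
      (1 - (f p * starRingEnd ℂ (((p : ℕ) : ℂ) ^ (I * α))).re) / (p : ℕ))
    (h' : Summable fun p : Nat.Primes =>
      (1 - (f p * starRingEnd ℂ (((p : ℕ) : ℂ) ^ (I * α'))).re) / (p : ℕ)) :
    Summable fun p : Nat.Primes => (1 - Real.cos ((α - α') * Real.log (p : ℕ))) / (p : ℕ) := by
  refine ((h.mul_left 2).add (h'.mul_left 2)).of_nonneg_of_le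
    (fun p => div_nonneg (by linarith [Real.cos_le_one ((α - α') * Real.log (p : ℕ))])
      (Nat.cast_nonneg _)) fun p => ?_
  have hp := p.prop.pos
  have key := one_sub_re_mul_conj_le (hb p) (norm_natCast_cpow_I_mul hp α)
    (norm_natCast_cpow_I_mul hp α')
  rw [re_natCast_cpow_I_mul_mul_conj hp] at key
  rw [← mul_div_assoc, ← mul_div_assoc, ← add_div]
  gcongr

lemma norm_neg_log_one_sub_sub_self_le {w : ℂ} (hw : ‖w‖ ≤ 1 / 2) :
    ‖-log (1 - w) - w‖ ≤ ‖w‖ ^ 2 := by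
  have hw1 : ‖w‖ < 1 := hw.trans_lt one_half_lt_one
  rw [← log_inv _ (slitPlane_arg_ne_pi (by
    simpa [sub_eq_add_neg] using mem_slitPlane_of_norm_lt_one ((norm_neg w).symm ▸ hw1)))]
  calc ‖log (1 - w)⁻¹ - w‖ ≤ ‖w‖ ^ 2 * (1 - ‖w‖)⁻¹ / 2 := norm_log_one_sub_inv_sub_self_le hw1
    _ ≤ ‖w‖ ^ 2 * 2 / 2 := by
      gcongr
      rw [inv_le_comm₀ (by linarith) two_pos]
      linarith
    _ = ‖w‖ ^ 2 := by ring

lemma norm_prime_cpow_neg_le {s : ℂ} (hs : 1 ≤ s.re) (p : Nat.Primes) :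
    ‖((p : ℕ) : ℂ) ^ (-s)‖ ≤ ((p : ℕ) : ℝ)⁻¹ := by
  rw [norm_natCast_cpow_of_pos p.prop.pos, ← Real.rpow_neg_one]
  exact Real.rpow_le_rpow_of_exponent_le (by exact_mod_cast p.prop.one_lt.le) (by simpa using hs)

lemma summable_prime_cpow_neg {s : ℂ} (hs : 1 < s.re) :
    Summable fun p : Nat.Primes => ((p : ℕ) : ℂ) ^ (-s) :=
  Summable.of_norm <| (Nat.Primes.summable_rpow.mpr (by simpa using hs)).congr fun p =>
    (norm_natCast_cpow_of_pos p.prop.pos _).symm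

lemma summable_prime_sq_inv : Summable fun p : Nat.Primes => (((p : ℕ) : ℝ) ^ 2)⁻¹ :=
  (Real.summable_nat_pow_inv.mpr one_lt_two).comp_injective Nat.Primes.coe_nat_injective

lemma abs_log_norm_riemannZeta_sub_tsum_le {s : ℂ} (hs : 1 < s.re) :
    |Real.log ‖riemannZeta s‖ - ∑' p : Nat.Primes, (((p : ℕ) : ℂ) ^ (-s)).re| ≤
      ∑' p : Nat.Primes, (((p : ℕ) : ℝ) ^ 2)⁻¹ := by
  have hw := summable_prime_cpow_neg hs
  have hlog := hw.clog_one_sub.neg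
  rw [← riemannZeta_eulerProduct_exp_log hs, norm_exp, Real.log_exp, ← re_tsum hw, ← sub_re,
    ← hlog.tsum_sub hw]
  refine (abs_re_le_norm _).trans (tsum_of_norm_bounded summable_prime_sq_inv.hasSum fun p => ?_)
  have hp : ((p : ℕ) : ℝ)⁻¹ ≤ 1 / 2 := by
    rw [one_div]; gcongr; exact_mod_cast p.prop.two_le
  have hwp := norm_prime_cpow_neg_le hs.le p
  calc _ ≤ ‖((p : ℕ) : ℂ) ^ (-s)‖ ^ 2 := norm_neg_log_one_sub_sub_self_le (hwp.trans hp)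
    _ ≤ (((p : ℕ) : ℝ)⁻¹) ^ 2 := by gcongr
    _ = _ := inv_pow _ _

lemma log_norm_riemannZeta_sub_le {σ : ℝ} (hσ : 1 < σ) (β : ℝ) :
    Real.log ‖riemannZeta σ‖ - Real.log ‖riemannZeta (σ + β * I)‖ ≤
      ∑' p : Nat.Primes, ((p : ℕ) : ℝ) ^ (-σ) * (1 - Real.cos (β * Real.log (p : ℕ))) +
        2 * ∑' p : Nat.Primes, (((p : ℕ) : ℝ) ^ 2)⁻¹ := by
  have hσ' : 1 < (σ : ℂ).re := by simpa using hσ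
  have hσβ : 1 < (σ + β * I : ℂ).re := by simpa using hσ
  have hreal := abs_le.mp (abs_log_norm_riemannZeta_sub_tsum_le hσ')
  have hshift := abs_le.mp (abs_log_norm_riemannZeta_sub_tsum_le hσβ)
  have hmain : ∑' p : Nat.Primes, (((p : ℕ) : ℂ) ^ (-(σ : ℂ))).re -
      ∑' p : Nat.Primes, (((p : ℕ) : ℂ) ^ (-(σ + β * I))).re =
      ∑' p : Nat.Primes, ((p : ℕ) : ℝ) ^ (-σ) * (1 - Real.cos (β * Real.log (p : ℕ))) := by
    rw [← re_tsum (summable_prime_cpow_neg hσ'), ← re_tsum (summable_prime_cpow_neg hσβ), ← sub_re,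
      ← (summable_prime_cpow_neg hσ').tsum_sub (summable_prime_cpow_neg hσβ),
      re_tsum ((summable_prime_cpow_neg hσ').sub (summable_prime_cpow_neg hσβ))]
    refine tsum_congr fun p => ?_
    rw [sub_re, re_natCast_cpow p.prop.pos, re_natCast_cpow p.prop.pos]
    simp only [neg_re, ofReal_re, neg_im, ofReal_im, neg_zero, zero_mul, Real.cos_zero, mul_one,
      neg_add_rev, add_re, mul_re, I_re, mul_zero, I_im, sub_self, zero_add, add_im, mul_im,
      add_zero, neg_mul, Real.cos_neg]
    ring
  linarith

lemma tendsto_norm_riemannZeta_nhdsGT_one :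
    Tendsto (fun σ : ℝ => ‖riemannZeta σ‖) (𝓝[>] 1) atTop := by
  have hofReal : Tendsto (fun σ : ℝ => (σ : ℂ)) (𝓝[>] 1) (𝓝[≠] 1) :=
    tendsto_nhdsWithin_iff.mpr ⟨(continuous_ofReal.tendsto' 1 1 ofReal_one).mono_left
      nhdsWithin_le_nhds, eventually_nhdsWithin_of_forall fun σ hσ => by
        simpa using (ne_of_gt hσ : σ ≠ 1)⟩
  have hres := (riemannZeta_residue_one.comp hofReal).norm
  have hinv : Tendsto (fun σ : ℝ => (σ - 1)⁻¹) (𝓝[>] 1) atTop :=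
    tendsto_inv_nhdsGT_zero.comp <| tendsto_nhdsWithin_iff.mpr
      ⟨(continuous_sub_right 1).tendsto' 1 0 (sub_self 1) |>.mono_left nhdsWithin_le_nhds,
        eventually_nhdsWithin_of_forall fun σ (hσ : 1 < σ) => Set.mem_Ioi.mpr (sub_pos.mpr hσ)⟩
  refine ((norm_one (α := ℂ) ▸ hres).pos_mul_atTop one_pos hinv).congr' ?_
  filter_upwards [self_mem_nhdsWithin] with σ (hσ : 1 < σ)
  rw [Function.comp_apply, norm_mul, ← ofReal_one, ← ofReal_sub, norm_real,
    Real.norm_of_nonneg (sub_pos.mpr hσ).le, mul_right_comm, mul_inv_cancel₀ (sub_pos.mpr hσ).ne',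
    one_mul]

lemma tsum_prime_rpow_neg_mul_le {g : Nat.Primes → ℝ} (hg : ∀ p, 0 ≤ g p)
    (hsum : Summable fun p : Nat.Primes => g p / (p : ℕ)) {σ : ℝ} (hσ : 1 ≤ σ) :
    ∑' p : Nat.Primes, ((p : ℕ) : ℝ) ^ (-σ) * g p ≤ ∑' p : Nat.Primes, g p / (p : ℕ) := by
  have hle (p : Nat.Primes) : ((p : ℕ) : ℝ) ^ (-σ) * g p ≤ g p / (p : ℕ) := by
    rw [div_eq_inv_mul, ← Real.rpow_neg_one]
    exact mul_le_mul_of_nonneg_right (Real.rpow_le_rpow_of_exponent_le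
      (by exact_mod_cast p.prop.one_lt.le) (by linarith)) (hg p)
  exact (hsum.of_nonneg_of_le (fun p => mul_nonneg (by positivity) (hg p)) hle).tsum_le_tsum
    hle hsum

lemma not_summable_one_sub_cos_mul_log_div {β : ℝ} (hβ : β ≠ 0) :
    ¬ Summable fun p : Nat.Primes => (1 - Real.cos (β * Real.log (p : ℕ))) / (p : ℕ) := by
  intro hsum
  set B := ‖riemannZeta (1 + β * I)‖ + 1
  have hbounded : ∀ᶠ σ : ℝ in 𝓝[>] 1, ‖riemannZeta (σ + β * I)‖ < B := by
    have hne : ((1 : ℝ) : ℂ) + β * I ≠ 1 := by simpa [Complex.ext_iff] using hβ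
    have hcont : ContinuousAt (fun σ : ℝ => riemannZeta (σ + β * I)) 1 :=
      (differentiableAt_riemannZeta hne).continuousAt.comp
        (f := fun σ : ℝ => (σ : ℂ) + β * I) (by fun_prop)
    have := hcont.norm.eventually_lt continuousAt_const (lt_add_one _)
    simpa using this.filter_mono nhdsWithin_le_nhds
  obtain ⟨σ, hσ, hlarge, hsmall⟩ := (eventually_mem_nhdsWithin.and <|
    ((Real.tendsto_log_atTop.comp tendsto_norm_riemannZeta_nhdsGT_one).eventually_gt_atTop
      (∑' p : Nat.Primes, (1 - Real.cos (β * Real.log (p : ℕ))) / (p : ℕ) +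
        2 * ∑' p : Nat.Primes, (((p : ℕ) : ℝ) ^ 2)⁻¹ + B)).and hbounded).exists
  have hcomparison := tsum_prime_rpow_neg_mul_le
    (fun p => sub_nonneg.mpr (Real.cos_le_one (β * Real.log (p : ℕ)))) hsum (le_of_lt hσ)
  have hlog := Real.log_le_self (norm_nonneg (riemannZeta (σ + β * I)))
  have hEuler := log_norm_riemannZeta_sub_le hσ β
  simp only [Function.comp_apply] at hlarge
  linarith

theorem pretentious_target_unique_general (f : ℕ → ℂ)
    (hb : ∀ n, ‖f n‖ ≤ 1) (α α' : ℝ)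
    (h1 : Summable (fun p : Nat.Primes =>
      (1 - (f p * (starRingEnd ℂ) (((p : ℕ) : ℂ) ^ (Complex.I * (α : ℂ)))).re) / ((p : ℕ) : ℝ)))
    (h2 : Summable (fun p : Nat.Primes =>
      (1 - (f p * (starRingEnd ℂ) (((p : ℕ) : ℂ) ^ (Complex.I * (α' : ℂ)))).re) / ((p : ℕ) : ℝ))) :
    α = α' := by
  by_contra hne
  exact not_summable_one_sub_cos_mul_log_div (sub_ne_zero.mpr hne)
    (summable_one_sub_cos_mul_log_div hb h1 h2)

/-- Uniqueness of the pretentious target: a unit-disc-valued multiplicative function can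
pretend to be `n^{iα}` for at most one real `α`. -/
theorem pretentious_target_unique (f : ℕ → ℂ)
    (hmult : ∀ m n : ℕ, Nat.Coprime m n → f (m * n) = f m * f n)
    (hb : ∀ n, ‖f n‖ ≤ 1) (α α' : ℝ)
    (h1 : Summable (fun p : Nat.Primes =>
      (1 - (f p * (starRingEnd ℂ) (((p : ℕ) : ℂ) ^ (Complex.I * (α : ℂ)))).re) / ((p : ℕ) : ℝ)))
    (h2 : Summable (fun p : Nat.Primes =>
      (1 - (f p * (starRingEnd ℂ) (((p : ℕ) : ℂ) ^ (Complex.I * (α' : ℂ)))).re) / ((p : ℕ) : ℝ))) :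
    α = α' :=
  pretentious_target_unique_general f hb α α' h1 h2
end
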